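/- arXiv:2012.11306 — 2 statements merged into one kernel-verified Lean document; each statement's English description precedes it below -/
import Mathlib

section
/- The identity Δ̃(x₁,x₂) = μ_{1,0} + μ_{2,0}(x₁+x₂) + μ_{3,0}(x₁+x₂)² + μ_{3,1}(x₁+x₂)x₁x₂ + (2μ_{0,3} + μ_{2,1} + μ_{3,0})x₁x₂ + μ_{3,2}(x₁x₂)² holds in ℤ[a₀,…,a₃,b₀,…,b₃][x₁,x₂]; that is, Δ̃ = G(x₁+x₂, x₁x₂) where G(s₁,s₂) = μ_{1,0} + μ_{2,0}s₁ + μ_{3,0}s₁² + μ_{3,1}s₁s₂ + (2μ_{0,3} + μ_{2,1} + μ_{3,0})s₂ + μ_{3,2}s₂². Moreover, if K is a field of characteristic ≠ 2 and μ_{2,3}·Res_x(P,Q) ≠ 0 in K, then the conic G(s₁,s₂) = 0 is non-degenerate and G is irreducible in K̄[s₁,s₂]. (The content of Proposition 3.11 of the paper: the quotient C₄ is a smooth conic.) -/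
open MvPolynomial

set_option maxHeartbeats 1600000
set_option maxRecDepth 100000

theorem det_fin_four' {R : Type} [CommRing R] (A : Matrix (Fin 4) (Fin 4) R) :
    A.det = A 0 0*A 1 1*A 2 2*A 3 3 - A 0 0*A 1 1*A 2 3*A 3 2 - A 0 0*A 1 2*A 2 1*A 3 3 + A 0 0*A 1 2*A 2 3*A 3 1 + A 0 0*A 1 3*A 2 1*A 3 2 - A 0 0*A 1 3*A 2 2*A 3 1 - A 0 1*A 1 0*A 2 2*A 3 3 + A 0 1*A 1 0*A 2 3*A 3 2 + A 0 1*A 1 2*A 2 0*A 3 3 - A 0 1*A 1 2*A 2 3*A 3 0 - A 0 1*A 1 3*A 2 0*A 3 2 + A 0 1*A 1 3*A 2 2*A 3 0 + A 0 2*A 1 0*A 2 1*A 3 3 - A 0 2*A 1 0*A 2 3*A 3 1 - A 0 2*A 1 1*A 2 0*A 3 3 + A 0 2*A 1 1*A 2 3*A 3 0 + A 0 2*A 1 3*A 2 0*A 3 1 - A 0 2*A 1 3*A 2 1*A 3 0 - A 0 3*A 1 0*A 2 1*A 3 2 + A 0 3*A 1 0*A 2 2*A 3 1 + A 0 3*A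 1 1*A 2 0*A 3 2 - A 0 3*A 1 1*A 2 2*A 3 0 - A 0 3*A 1 2*A 2 0*A 3 1 + A 0 3*A 1 2*A 2 1*A 3 0 := by
  have h0 : A.submatrix (Fin.succAbove 0) Fin.succ = !![A 1 1, A 1 2, A 1 3; A 2 1, A 2 2, A 2 3; A 3 1, A 3 2, A 3 3] := by
    ext i j; fin_cases i <;> fin_cases j <;> rfl
  have h1 : A.submatrix (Fin.succAbove 1) Fin.succ = !![A 0 1, A 0 2, A 0 3; A 2 1, A 2 2, A 2 3; A 3 1, A 3 2, A 3 3] := by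
    ext i j; fin_cases i <;> fin_cases j <;> rfl
  have h2 : A.submatrix (Fin.succAbove 2) Fin.succ = !![A 0 1, A 0 2, A 0 3; A 1 1, A 1 2, A 1 3; A 3 1, A 3 2, A 3 3] := by
    ext i j; fin_cases i <;> fin_cases j <;> rfl
  have h3 : A.submatrix (Fin.succAbove 3) Fin.succ = !![A 0 1, A 0 2, A 0 3; A 1 1, A 1 2, A 1 3; A 2 1, A 2 2, A 2 3] := by
    ext i j; fin_cases i <;> fin_cases j <;> rfl
  rw [Matrix.det_succ_column_zero, Fin.sum_univ_four, h0, h1, h2, h3, Matrix.det_fin_three, Matrix.det_fin_three, Matrix.det_fin_three, Matrix.det_fin_three]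
  simp [show ((0:Fin 4):ℕ) = 0 from rfl, show ((1:Fin 4):ℕ) = 1 from rfl, show ((2:Fin 4):ℕ) = 2 from rfl, show ((3:Fin 4):ℕ) = 3 from rfl]
  ring

theorem det_fin_five' {R : Type} [CommRing R] (A : Matrix (Fin 5) (Fin 5) R) :
    A.det = A 0 0*A 1 1*A 2 2*A 3 3*A 4 4 - A 0 0*A 1 1*A 2 2*A 3 4*A 4 3 - A 0 0*A 1 1*A 2 3*A 3 2*A 4 4 + A 0 0*A 1 1*A 2 3*A 3 4*A 4 2 + A 0 0*A 1 1*A 2 4*A 3 2*A 4 3 - A 0 0*A 1 1*A 2 4*A 3 3*A 4 2 - A 0 0*A 1 2*A 2 1*A 3 3*A 4 4 + A 0 0*A 1 2*A 2 1*A 3 4*A 4 3 + A 0 0*A 1 2*A 2 3*A 3 1*A 4 4 - A 0 0*A 1 2*A 2 3*A 3 4*A 4 1 - A 0 0*A 1 2*A 2 4*A 3 1*A 4 3 + A 0 0*A 1 2*A 2 4*A 3 3*A 4 1 + A 0 0*A 1 3*A 2 1*A 3 2*A 4 4 - A 0 0*A 1 3*A 2 1*A 3 4*A 4 2 - A 0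 0*A 1 3*A 2 2*A 3 1*A 4 4 + A 0 0*A 1 3*A 2 2*A 3 4*A 4 1 + A 0 0*A 1 3*A 2 4*A 3 1*A 4 2 - A 0 0*A 1 3*A 2 4*A 3 2*A 4 1 - A 0 0*A 1 4*A 2 1*A 3 2*A 4 3 + A 0 0*A 1 4*A 2 1*A 3 3*A 4 2 + A 0 0*A 1 4*A 2 2*A 3 1*A 4 3 - A 0 0*A 1 4*A 2 2*A 3 3*A 4 1 - A 0 0*A 1 4*A 2 3*A 3 1*A 4 2 + A 0 0*A 1 4*A 2 3*A 3 2*A 4 1 - A 0 1*A 1 0*A 2 2*A 3 3*A 4 4 + A 0 1*A 1 0*A 2 2*A 3 4*A 4 3 + A 0 1*A 1 0*A 2 3*A 3 2*A 4 4 - A 0 1*A 1 0*A 2 3*A 3 4*A 4 2 - A 0 1*A 1 0*A 2 4*A 3 2*A 4 3 + A 0 1*A 1 0*A 2 4*A 3 3*A 4 2 + A 0 1*A 1 2*A 2 0*A 3 3*A 4 4 - A 0 1*A 1 2*A 2 0*A 3 4*A 4 3 - A 0 1*A 1 2*A 2 3*A 3 0*A 4 4 + A 0 1*A 1 2*A 2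 3*A 3 4*A 4 0 + A 0 1*A 1 2*A 2 4*A 3 0*A 4 3 - A 0 1*A 1 2*A 2 4*A 3 3*A 4 0 - A 0 1*A 1 3*A 2 0*A 3 2*A 4 4 + A 0 1*A 1 3*A 2 0*A 3 4*A 4 2 + A 0 1*A 1 3*A 2 2*A 3 0*A 4 4 - A 0 1*A 1 3*A 2 2*A 3 4*A 4 0 - A 0 1*A 1 3*A 2 4*A 3 0*A 4 2 + A 0 1*A 1 3*A 2 4*A 3 2*A 4 0 + A 0 1*A 1 4*A 2 0*A 3 2*A 4 3 - A 0 1*A 1 4*A 2 0*A 3 3*A 4 2 - A 0 1*A 1 4*A 2 2*A 3 0*A 4 3 + A 0 1*A 1 4*A 2 2*A 3 3*A 4 0 + A 0 1*A 1 4*A 2 3*A 3 0*A 4 2 - A 0 1*A 1 4*A 2 3*A 3 2*A 4 0 + A 0 2*A 1 0*A 2 1*A 3 3*A 4 4 - A 0 2*A 1 0*A 2 1*A 3 4*A 4 3 - A 0 2*A 1 0*A 2 3*A 3 1*A 4 4 + A 0 2*A 1 0*A 2 3*A 3 4*A 4 1 + A 0 2*A 1 0*A 2 4*A 3 1*A 4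 3 - A 0 2*A 1 0*A 2 4*A 3 3*A 4 1 - A 0 2*A 1 1*A 2 0*A 3 3*A 4 4 + A 0 2*A 1 1*A 2 0*A 3 4*A 4 3 + A 0 2*A 1 1*A 2 3*A 3 0*A 4 4 - A 0 2*A 1 1*A 2 3*A 3 4*A 4 0 - A 0 2*A 1 1*A 2 4*A 3 0*A 4 3 + A 0 2*A 1 1*A 2 4*A 3 3*A 4 0 + A 0 2*A 1 3*A 2 0*A 3 1*A 4 4 - A 0 2*A 1 3*A 2 0*A 3 4*A 4 1 - A 0 2*A 1 3*A 2 1*A 3 0*A 4 4 + A 0 2*A 1 3*A 2 1*A 3 4*A 4 0 + A 0 2*A 1 3*A 2 4*A 3 0*A 4 1 - A 0 2*A 1 3*A 2 4*A 3 1*A 4 0 - A 0 2*A 1 4*A 2 0*A 3 1*A 4 3 + A 0 2*A 1 4*A 2 0*A 3 3*A 4 1 + A 0 2*A 1 4*A 2 1*A 3 0*A 4 3 - A 0 2*A 1 4*A 2 1*A 3 3*A 4 0 - A 0 2*A 1 4*A 2 3*A 3 0*A 4 1 + A 0 2*A 1 4*A 2 3*A 3 1*A 4 0 - A 0 3*A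 1 0*A 2 1*A 3 2*A 4 4 + A 0 3*A 1 0*A 2 1*A 3 4*A 4 2 + A 0 3*A 1 0*A 2 2*A 3 1*A 4 4 - A 0 3*A 1 0*A 2 2*A 3 4*A 4 1 - A 0 3*A 1 0*A 2 4*A 3 1*A 4 2 + A 0 3*A 1 0*A 2 4*A 3 2*A 4 1 + A 0 3*A 1 1*A 2 0*A 3 2*A 4 4 - A 0 3*A 1 1*A 2 0*A 3 4*A 4 2 - A 0 3*A 1 1*A 2 2*A 3 0*A 4 4 + A 0 3*A 1 1*A 2 2*A 3 4*A 4 0 + A 0 3*A 1 1*A 2 4*A 3 0*A 4 2 - A 0 3*A 1 1*A 2 4*A 3 2*A 4 0 - A 0 3*A 1 2*A 2 0*A 3 1*A 4 4 + A 0 3*A 1 2*A 2 0*A 3 4*A 4 1 + A 0 3*A 1 2*A 2 1*A 3 0*A 4 4 - A 0 3*A 1 2*A 2 1*A 3 4*A 4 0 - A 0 3*A 1 2*A 2 4*A 3 0*A 4 1 + A 0 3*A 1 2*A 2 4*A 3 1*A 4 0 + A 0 3*A 1 4*A 2 0*A 3 1*A 4 2 - A 0 3*A 1 4*A 2 0*A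 3 2*A 4 1 - A 0 3*A 1 4*A 2 1*A 3 0*A 4 2 + A 0 3*A 1 4*A 2 1*A 3 2*A 4 0 + A 0 3*A 1 4*A 2 2*A 3 0*A 4 1 - A 0 3*A 1 4*A 2 2*A 3 1*A 4 0 + A 0 4*A 1 0*A 2 1*A 3 2*A 4 3 - A 0 4*A 1 0*A 2 1*A 3 3*A 4 2 - A 0 4*A 1 0*A 2 2*A 3 1*A 4 3 + A 0 4*A 1 0*A 2 2*A 3 3*A 4 1 + A 0 4*A 1 0*A 2 3*A 3 1*A 4 2 - A 0 4*A 1 0*A 2 3*A 3 2*A 4 1 - A 0 4*A 1 1*A 2 0*A 3 2*A 4 3 + A 0 4*A 1 1*A 2 0*A 3 3*A 4 2 + A 0 4*A 1 1*A 2 2*A 3 0*A 4 3 - A 0 4*A 1 1*A 2 2*A 3 3*A 4 0 - A 0 4*A 1 1*A 2 3*A 3 0*A 4 2 + A 0 4*A 1 1*A 2 3*A 3 2*A 4 0 + A 0 4*A 1 2*A 2 0*A 3 1*A 4 3 - A 0 4*A 1 2*A 2 0*A 3 3*A 4 1 - A 0 4*A 1 2*A 2 1*A 3 0*A 4 3 +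 A 0 4*A 1 2*A 2 1*A 3 3*A 4 0 + A 0 4*A 1 2*A 2 3*A 3 0*A 4 1 - A 0 4*A 1 2*A 2 3*A 3 1*A 4 0 - A 0 4*A 1 3*A 2 0*A 3 1*A 4 2 + A 0 4*A 1 3*A 2 0*A 3 2*A 4 1 + A 0 4*A 1 3*A 2 1*A 3 0*A 4 2 - A 0 4*A 1 3*A 2 1*A 3 2*A 4 0 - A 0 4*A 1 3*A 2 2*A 3 0*A 4 1 + A 0 4*A 1 3*A 2 2*A 3 1*A 4 0 := by
  have h0 : A.submatrix (Fin.succAbove 0) Fin.succ = !![A 1 1, A 1 2, A 1 3, A 1 4; A 2 1, A 2 2, A 2 3, A 2 4; A 3 1, A 3 2, A 3 3, A 3 4; A 4 1, A 4 2, A 4 3, A 4 4] := by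
    ext i j; fin_cases i <;> fin_cases j <;> rfl
  have h1 : A.submatrix (Fin.succAbove 1) Fin.succ = !![A 0 1, A 0 2, A 0 3, A 0 4; A 2 1, A 2 2, A 2 3, A 2 4; A 3 1, A 3 2, A 3 3, A 3 4; A 4 1, A 4 2, A 4 3, A 4 4] := by
    ext i j; fin_cases i <;> fin_cases j <;> rfl
  have h2 : A.submatrix (Fin.succAbove 2) Fin.succ = !![A 0 1, A 0 2, A 0 3, A 0 4; A 1 1, A 1 2, A 1 3, A 1 4; A 3 1, A 3 2, A 3 3, A 3 4; A 4 1, A 4 2, A 4 3, A 4 4] := by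
    ext i j; fin_cases i <;> fin_cases j <;> rfl
  have h3 : A.submatrix (Fin.succAbove 3) Fin.succ = !![A 0 1, A 0 2, A 0 3, A 0 4; A 1 1, A 1 2, A 1 3, A 1 4; A 2 1, A 2 2, A 2 3, A 2 4; A 4 1, A 4 2, A 4 3, A 4 4] := by
    ext i j; fin_cases i <;> fin_cases j <;> rfl
  have h4 : A.submatrix (Fin.succAbove 4) Fin.succ = !![A 0 1, A 0 2, A 0 3, A 0 4; A 1 1, A 1 2, A 1 3, A 1 4; A 2 1, A 2 2, A 2 3, A 2 4; A 3 1, A 3 2, A 3 3, A 3 4] := by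
    ext i j; fin_cases i <;> fin_cases j <;> rfl
  rw [Matrix.det_succ_column_zero, Fin.sum_univ_five, h0, h1, h2, h3, h4, det_fin_four', det_fin_four', det_fin_four', det_fin_four', det_fin_four']
  simp [show ((0:Fin 5):ℕ) = 0 from rfl, show ((1:Fin 5):ℕ) = 1 from rfl, show ((2:Fin 5):ℕ) = 2 from rfl, show ((3:Fin 5):ℕ) = 3 from rfl, show ((4:Fin 5):ℕ) = 4 from rfl]
  ring

theorem det_six_sylvester {K : Type} [CommRing K] (a₀ a₁ a₂ a₃ b₀ b₁ b₂ b₃ : K) :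
    Matrix.det
      (!![a₃, a₂, a₁, a₀, 0, 0; 0, a₃, a₂, a₁, a₀, 0; 0, 0, a₃, a₂, a₁, a₀; b₃, b₂, b₁, b₀, 0, 0; 0, b₃, b₂, b₁, b₀, 0; 0, 0, b₃, b₂, b₁, b₀] : Matrix (Fin 6) (Fin 6) K)
    = - a₀*a₀*a₀*b₃*b₃*b₃ + a₀*a₀*a₁*b₂*b₃*b₃ + 2*a₀*a₀*a₂*b₁*b₃*b₃ - a₀*a₀*a₂*b₂*b₂*b₃ + 3*a₀*a₀*a₃*b₀*b₃*b₃ - 3*a₀*a₀*a₃*b₁*b₂*b₃ + a₀*a₀*a₃*b₂*b₂*b₂ - a₀*a₁*a₁*b₁*b₃*b₃ - 3*a₀*a₁*a₂*b₀*b₃*b₃ + a₀*a₁*a₂*b₁*b₂*b₃ + a₀*a₁*a₃*b₀*b₂*b₃ + 2*a₀*a₁*a₃*b₁*b₁*b₃ - a₀*a₁*a₃*b₁*b₂*b₂ + 2*a₀*a₂*a₂*b₀*b₂*b₃ - a₀*a₂*a₂*b₁*b₁*b₃ - a₀*a₂*a₃*b₀*b₁*b₃ - 2*a₀*a₂*a₃*b₀*b₂*b₂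 + a₀*a₂*a₃*b₁*b₁*b₂ - 3*a₀*a₃*a₃*b₀*b₀*b₃ + 3*a₀*a₃*a₃*b₀*b₁*b₂ - a₀*a₃*a₃*b₁*b₁*b₁ + a₁*a₁*a₁*b₀*b₃*b₃ - a₁*a₁*a₂*b₀*b₂*b₃ - 2*a₁*a₁*a₃*b₀*b₁*b₃ + a₁*a₁*a₃*b₀*b₂*b₂ + a₁*a₂*a₂*b₀*b₁*b₃ + 3*a₁*a₂*a₃*b₀*b₀*b₃ - a₁*a₂*a₃*b₀*b₁*b₂ - 2*a₁*a₃*a₃*b₀*b₀*b₂ + a₁*a₃*a₃*b₀*b₁*b₁ - a₂*a₂*a₂*b₀*b₀*b₃ + a₂*a₂*a₃*b₀*b₀*b₂ - a₂*a₃*a₃*b₀*b₀*b₁ + a₃*a₃*a₃*b₀*b₀*b₀ := by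
  have h0 : (!![a₃, a₂, a₁, a₀, 0, 0; 0, a₃, a₂, a₁, a₀, 0; 0, 0, a₃, a₂, a₁, a₀; b₃, b₂, b₁, b₀, 0, 0; 0, b₃, b₂, b₁, b₀, 0; 0, 0, b₃, b₂, b₁, b₀] : Matrix (Fin 6) (Fin 6) K).submatrix (Fin.succAbove 0) Fin.succ
      = !![a₃, a₂, a₁, a₀, 0; 0, a₃, a₂, a₁, a₀; b₂, b₁, b₀, 0, 0; b₃, b₂, b₁, b₀, 0; 0, b₃, b₂, b₁, b₀] := by
    ext i j; fin_cases i <;> fin_cases j <;> rfl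
  have h3 : (!![a₃, a₂, a₁, a₀, 0, 0; 0, a₃, a₂, a₁, a₀, 0; 0, 0, a₃, a₂, a₁, a₀; b₃, b₂, b₁, b₀, 0, 0; 0, b₃, b₂, b₁, b₀, 0; 0, 0, b₃, b₂, b₁, b₀] : Matrix (Fin 6) (Fin 6) K).submatrix (Fin.succAbove 3) Fin.succ
      = !![a₂, a₁, a₀, 0, 0; a₃, a₂, a₁, a₀, 0; 0, a₃, a₂, a₁, a₀; b₃, b₂, b₁, b₀, 0; 0, b₃, b₂, b₁, b₀] := by
    ext i j; fin_cases i <;> fin_cases j <;> rfl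
  rw [Matrix.det_succ_column_zero, Fin.sum_univ_six, h0, h3]
  simp only [show (!![a₃, a₂, a₁, a₀, 0, 0; 0, a₃, a₂, a₁, a₀, 0; 0, 0, a₃, a₂, a₁, a₀; b₃, b₂, b₁, b₀, 0, 0; 0, b₃, b₂, b₁, b₀, 0; 0, 0, b₃, b₂, b₁, b₀] : Matrix (Fin 6) (Fin 6) K) 0 0 = a₃ from rfl, show (!![a₃, a₂, a₁, a₀, 0, 0; 0, a₃, a₂, a₁, a₀, 0; 0, 0, a₃, a₂, a₁, a₀; b₃, b₂, b₁, b₀, 0, 0; 0, b₃, b₂, b₁, b₀, 0; 0, 0, b₃, b₂, b₁, b₀] : Matrix (Fin 6) (Fin 6) K) 1 0 = (0:K) from rfl, show (!![a₃, a₂, a₁, a₀, 0, 0; 0, a₃, a₂, a₁, a₀, 0; 0, 0, a₃, a₂, a₁, a₀; b₃, b₂, b₁, b₀, 0, 0; 0, b₃, b₂, b₁, b₀, 0; 0, 0, b₃, b₂, b₁, b₀] : Matrix (Fin 6) (Fin 6) K) 2 0 = (0:K) from rfl, show (!![a₃, a₂, a₁, a₀, 0, 0; 0, a₃, a₂, a₁,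 a₀, 0; 0, 0, a₃, a₂, a₁, a₀; b₃, b₂, b₁, b₀, 0, 0; 0, b₃, b₂, b₁, b₀, 0; 0, 0, b₃, b₂, b₁, b₀] : Matrix (Fin 6) (Fin 6) K) 3 0 = b₃ from rfl, show (!![a₃, a₂, a₁, a₀, 0, 0; 0, a₃, a₂, a₁, a₀, 0; 0, 0, a₃, a₂, a₁, a₀; b₃, b₂, b₁, b₀, 0, 0; 0, b₃, b₂, b₁, b₀, 0; 0, 0, b₃, b₂, b₁, b₀] : Matrix (Fin 6) (Fin 6) K) 4 0 = (0:K) from rfl, show (!![a₃, a₂, a₁, a₀, 0, 0; 0, a₃, a₂, a₁, a₀, 0; 0, 0, a₃, a₂, a₁, a₀; b₃, b₂, b₁, b₀, 0, 0; 0, b₃, b₂, b₁, b₀, 0; 0, 0, b₃, b₂, b₁, b₀] : Matrix (Fin 6) (Fin 6) K) 5 0 = (0:K) from rfl, show ((0:Fin 6):ℕ) = 0 from rfl, show ((1:Fin 6):ℕ) = 1 from rfl, show ((2:Fin 6):ℕ) = 2 from rfl, show ((3:Fin 6):ℕ) = 3 from rfl, show ((4:Fin 6):ℕ) = 4 from rfl,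 show ((5:Fin 6):ℕ) = 5 from rfl, zero_mul, mul_zero, add_zero, zero_add]
  rw [det_fin_five', det_fin_five']
  simp [show ((0:Fin 6):ℕ) = 0 from rfl, show ((1:Fin 6):ℕ) = 1 from rfl, show ((2:Fin 6):ℕ) = 2 from rfl, show ((3:Fin 6):ℕ) = 3 from rfl, show ((4:Fin 6):ℕ) = 4 from rfl, show ((5:Fin 6):ℕ) = 5 from rfl]
  ring

noncomputable def myEquiv (F : Type) [CommSemiring F] :
    MvPolynomial (Fin 2) F ≃+* Polynomial (Polynomial F) :=
  (MvPolynomial.renameEquiv F (Equiv.swap (0 : Fin 2) 1)).toRingEquiv.trans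
    ((MvPolynomial.finSuccEquiv F 1).toRingEquiv.trans
      (Polynomial.mapEquiv
        ((MvPolynomial.finSuccEquiv F 0).toRingEquiv.trans
          (Polynomial.mapEquiv (MvPolynomial.isEmptyRingEquiv F (Fin 0))))))

theorem myEquiv_C (F : Type) [CommSemiring F] (c : F) :
    myEquiv F (C c) = Polynomial.C (Polynomial.C c) := by
  simp [myEquiv, Polynomial.mapEquiv_apply, finSuccEquiv_apply]
  exact (MvPolynomial.coeff_C _ _).trans (if_pos (Subsingleton.elim _ _))

theorem myEquiv_X0 (F : Type) [CommSemiring F] :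
    myEquiv F (X 0) = Polynomial.C Polynomial.X := by
  simp only [myEquiv, Polynomial.mapEquiv_apply]
  simp only [RingEquiv.trans_apply, AlgEquiv.toRingEquiv_eq_coe, AlgEquiv.coe_ringEquiv,
    renameEquiv_apply, rename_X, Equiv.swap_apply_left, Polynomial.mapEquiv_apply]
  rw [show (X (1:Fin 2) : MvPolynomial (Fin 2) F) = X (Fin.succ 0) from rfl,
    finSuccEquiv_X_succ, Polynomial.map_C]
  simp [finSuccEquiv_X_zero]

theorem myEquiv_X1 (F : Type) [CommSemiring F] :
    myEquiv F (X 1) = Polynomial.X := by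
  rw [show (X 1 : MvPolynomial (Fin 2) F) = X (Equiv.swap (0:Fin 2) 1 0) from rfl]
  simp [myEquiv, Polynomial.mapEquiv_apply, finSuccEquiv_apply, rename_X]

theorem conic_irred {F : Type} [Field F] (c0 c1 c2 c3 c4 c5 : F) (hc5 : c5 ≠ 0)
    (hδ : (2*c3*c4 - 4*c5*c1)^2 - 4*(c3^2 - 4*c5*c2)*(c4^2 - 4*c5*c0) ≠ 0) :
    Irreducible (C c0 + C c1 * X 0 + C c2 * X 0^2 + C c3 * X 0 * X 1 + C c4 * X 1
      + C c5 * X 1^2 : MvPolynomial (Fin 2) F) := by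
  rw [← MulEquiv.irreducible_iff (myEquiv F)]
  have e0 : c0 = c5 * (c5⁻¹ * c0) := (mul_inv_cancel_left₀ hc5 c0).symm
  have e1 : c1 = c5 * (c5⁻¹ * c1) := (mul_inv_cancel_left₀ hc5 c1).symm
  have e2 : c2 = c5 * (c5⁻¹ * c2) := (mul_inv_cancel_left₀ hc5 c2).symm
  have e3 : c3 = c5 * (c5⁻¹ * c3) := (mul_inv_cancel_left₀ hc5 c3).symm
  have e4 : c4 = c5 * (c5⁻¹ * c4) := (mul_inv_cancel_left₀ hc5 c4).symm
  set B : Polynomial F := Polynomial.C (c5⁻¹*c4) + Polynomial.C (c5⁻¹*c3) * Polynomial.X with hB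
  set Cc : Polynomial F := Polynomial.C (c5⁻¹*c0) + Polynomial.C (c5⁻¹*c1) * Polynomial.X
      + Polynomial.C (c5⁻¹*c2) * Polynomial.X^2 with hCc
  have hq : myEquiv F (C c0 + C c1 * X 0 + C c2 * X 0^2 + C c3 * X 0 * X 1 + C c4 * X 1
      + C c5 * X 1^2 : MvPolynomial (Fin 2) F)
      = Polynomial.C (Polynomial.C c5) *
        (Polynomial.X^2 + (Polynomial.C B * Polynomial.X + Polynomial.C Cc)) := by
    rw [hB, hCc]
    simp only [map_add, map_mul, map_pow, myEquiv_C, myEquiv_X0, myEquiv_X1]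
    conv_lhs => rw [e0, e1, e2, e3, e4]
    simp only [map_add, map_mul, map_pow]
    ring
  rw [hq, irreducible_isUnit_mul
    (Polynomial.isUnit_C.mpr (Polynomial.isUnit_C.mpr (isUnit_iff_ne_zero.mpr hc5)))]
  have hmon : (Polynomial.X^2 + (Polynomial.C B * Polynomial.X + Polynomial.C Cc)).Monic :=
    Polynomial.monic_X_pow_add (lt_of_le_of_lt (Polynomial.degree_linear_le) (by decide))
  have hdeg : (Polynomial.X^2 + (Polynomial.C B * Polynomial.X + Polynomial.C Cc)).natDegree
      = 2 := by
    rw [show (Polynomial.X^2 + (Polynomial.C B * Polynomial.X + Polynomial.C Cc)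
          : Polynomial (Polynomial F))
        = Polynomial.C 1 * Polynomial.X^2 + Polynomial.C B * Polynomial.X + Polynomial.C Cc by
      rw [map_one, one_mul, add_assoc]]
    exact Polynomial.natDegree_quadratic one_ne_zero
  by_contra hni
  obtain ⟨u, v, huv0, huv1⟩ := (hmon.not_irreducible_iff_exists_add_mul_eq_coeff hdeg).mp hni
  have hcoeff0 : (Polynomial.X^2 + (Polynomial.C B * Polynomial.X + Polynomial.C Cc)).coeff 0
      = Cc := by simp
  have hcoeff1 : (Polynomial.X^2 + (Polynomial.C B * Polynomial.X + Polynomial.C Cc)).coeff 1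
      = B := by simp
  rw [hcoeff0] at huv0
  rw [hcoeff1] at huv1
  set α : F := (c5⁻¹*c3)^2 - 4*(c5⁻¹*c2) with hα
  set β : F := 2*(c5⁻¹*c3)*(c5⁻¹*c4) - 4*(c5⁻¹*c1) with hβ
  set γ : F := (c5⁻¹*c4)^2 - 4*(c5⁻¹*c0) with hγ
  have hBC : Polynomial.C α * Polynomial.X^2 + Polynomial.C β * Polynomial.X + Polynomial.C γ
      = B^2 - 4*Cc := by
    rw [hα, hβ, hγ, hB, hCc]
    simp only [map_sub, map_add, map_mul, map_pow, map_ofNat]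
    ring
  have hsq : B^2 - 4*Cc = (u - v)^2 := by rw [huv0, huv1]; ring
  have hquad : Polynomial.C α * Polynomial.X^2 + Polynomial.C β * Polynomial.X + Polynomial.C γ
      = (u - v)^2 := by rw [hBC, hsq]
  have hdle : (u - v).natDegree ≤ 1 := by
    rcases eq_or_ne (u - v) 0 with h0 | h0
    · rw [h0]; simp
    · have h2 : ((u - v)^2).natDegree = 2 * (u - v).natDegree :=
        Polynomial.natDegree_pow' (pow_ne_zero 2 (Polynomial.leadingCoeff_ne_zero.mpr h0))
      have hle : ((u - v)^2).natDegree ≤ 2 := by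
        rw [← hquad]; exact Polynomial.natDegree_quadratic_le
      omega
  have hform := Polynomial.eq_X_add_C_of_natDegree_le_one hdle
  set p1 : F := (u - v).coeff 1
  set q1 : F := (u - v).coeff 0
  have hkey : Polynomial.C α * Polynomial.X^2 + Polynomial.C β * Polynomial.X + Polynomial.C γ
      = Polynomial.C (p1^2) * Polynomial.X^2 + Polynomial.C (2*p1*q1) * Polynomial.X
        + Polynomial.C (q1^2) := by
    rw [hquad, hform]
    simp only [map_mul, map_pow, map_ofNat]
    ring
  have hα2 : α = p1^2 := by
    have := congrArg (fun f => Polynomial.coeff f 2) hkey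
    simp only [Polynomial.coeff_add, Polynomial.coeff_C_mul, Polynomial.coeff_X_pow,
      Polynomial.coeff_X, Polynomial.coeff_C] at this
    simpa using this
  have hβ2 : β = 2*p1*q1 := by
    have := congrArg (fun f => Polynomial.coeff f 1) hkey
    simp only [Polynomial.coeff_add, Polynomial.coeff_C_mul, Polynomial.coeff_X_pow,
      Polynomial.coeff_X, Polynomial.coeff_C] at this
    simpa using this
  have hγ2 : γ = q1^2 := by
    have := congrArg (fun f => Polynomial.coeff f 0) hkey
    simp only [Polynomial.coeff_add, Polynomial.coeff_C_mul, Polynomial.coeff_X_pow,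
      Polynomial.coeff_X, Polynomial.coeff_C] at this
    simpa using this
  have hδ' : β^2 - 4*α*γ ≠ 0 := by
    have key : (2*c3*c4 - 4*c5*c1)^2 - 4*(c3^2 - 4*c5*c2)*(c4^2 - 4*c5*c0)
        = c5^4 * (β^2 - 4*α*γ) := by
      rw [hα, hβ, hγ]
      conv_lhs => rw [e0, e1, e2, e3, e4]
      ring
    intro h
    exact hδ (by rw [key, h, mul_zero])
  exact hδ' (by rw [hα2, hβ2, hγ2]; ring)

/-- **Proposition 3.11.** (1) The identity
`Δ̃(x₁,x₂) = G(x₁ + x₂, x₁x₂)` with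
`G(s₁,s₂) = μ₁₀ + μ₂₀s₁ + μ₃₀s₁² + μ₃₁s₁s₂ + (2μ₀₃ + μ₂₁ + μ₃₀)s₂ + μ₃₂s₂²`
holds in `ℤ[a₀,…,a₃,b₀,…,b₃][x₁,x₂]` (equivalently, elementwise in every
commutative ring). (2) If `K` is a field of characteristic `≠ 2` and
`μ₂₃·Res_x(P,Q) ≠ 0`, then the conic `G(s₁,s₂) = 0` is non-degenerate (the
determinant of its associated symmetric matrix is nonzero) and `G` is
irreducible in `K̄[s₁,s₂]`. -/
theorem quotient_C4_is_smooth_conic :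
    (∀ (R : Type) [CommRing R], ∀ a₀ a₁ a₂ a₃ b₀ b₁ b₂ b₃ x₁ x₂ : R,
      ((a₁ * b₀ - a₀ * b₁) + (a₂ * b₀ - a₀ * b₂) * x₂ + (a₃ * b₀ - a₀ * b₃) * x₂ ^ 2)
        + ((a₂ * b₀ - a₀ * b₂) + ((a₃ * b₀ - a₀ * b₃) + (a₂ * b₁ - a₁ * b₂)) * x₂
            + (a₃ * b₁ - a₁ * b₃) * x₂ ^ 2) * x₁
        + ((a₃ * b₀ - a₀ * b₃) + (a₃ * b₁ - a₁ * b₃) * x₂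
            + (a₃ * b₂ - a₂ * b₃) * x₂ ^ 2) * x₁ ^ 2
      = (a₁ * b₀ - a₀ * b₁) + (a₂ * b₀ - a₀ * b₂) * (x₁ + x₂)
        + (a₃ * b₀ - a₀ * b₃) * (x₁ + x₂) ^ 2
        + (a₃ * b₁ - a₁ * b₃) * (x₁ + x₂) * (x₁ * x₂)
        + (2 * (a₀ * b₃ - a₃ * b₀) + (a₂ * b₁ - a₁ * b₂) + (a₃ * b₀ - a₀ * b₃))
            * (x₁ * x₂)
        + (a₃ * b₂ - a₂ * b₃) * (x₁ * x₂) ^ 2)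
    ∧
    (∀ (K : Type) [Field K], ∀ (_ : (2 : K) ≠ 0), ∀ a₀ a₁ a₂ a₃ b₀ b₁ b₂ b₃ : K,
      (a₂ * b₃ - a₃ * b₂) *
        Matrix.det
          !![a₃, a₂, a₁, a₀, 0, 0;
             0, a₃, a₂, a₁, a₀, 0;
             0, 0, a₃, a₂, a₁, a₀;
             b₃, b₂, b₁, b₀, 0, 0;
             0, b₃, b₂, b₁, b₀, 0;
             0, 0, b₃, b₂, b₁, b₀] ≠ 0 →
      (Matrix.det
        !![2 * (a₃ * b₀ - a₀ * b₃), a₃ * b₁ - a₁ * b₃, a₂ * b₀ - a₀ * b₂;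
           a₃ * b₁ - a₁ * b₃, 2 * (a₃ * b₂ - a₂ * b₃),
             2 * (a₀ * b₃ - a₃ * b₀) + (a₂ * b₁ - a₁ * b₂) + (a₃ * b₀ - a₀ * b₃);
           a₂ * b₀ - a₀ * b₂,
             2 * (a₀ * b₃ - a₃ * b₀) + (a₂ * b₁ - a₁ * b₂) + (a₃ * b₀ - a₀ * b₃),
             2 * (a₁ * b₀ - a₀ * b₁)] ≠ 0)
      ∧ Irreducible
          ((C (algebraMap K (AlgebraicClosure K) (a₁ * b₀ - a₀ * b₁))
            + C (algebraMap K (AlgebraicClosure K) (a₂ * b₀ - a₀ * b₂)) * X 0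
            + C (algebraMap K (AlgebraicClosure K) (a₃ * b₀ - a₀ * b₃)) * X 0 ^ 2
            + C (algebraMap K (AlgebraicClosure K) (a₃ * b₁ - a₁ * b₃)) * X 0 * X 1
            + C (algebraMap K (AlgebraicClosure K)
                (2 * (a₀ * b₃ - a₃ * b₀) + (a₂ * b₁ - a₁ * b₂) + (a₃ * b₀ - a₀ * b₃)))
                * X 1
            + C (algebraMap K (AlgebraicClosure K) (a₃ * b₂ - a₂ * b₃)) * X 1 ^ 2
            : MvPolynomial (Fin 2) (AlgebraicClosure K)))) := by
  
  constructor
  · intro R _ a₀ a₁ a₂ a₃ b₀ b₁ b₂ b₃ x₁ x₂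
    ring
  · intro K _ h2 a₀ a₁ a₂ a₃ b₀ b₁ b₂ b₃ hμres
    have hres : Matrix.det
        !![a₃, a₂, a₁, a₀, 0, 0;
           0, a₃, a₂, a₁, a₀, 0;
           0, 0, a₃, a₂, a₁, a₀;
           b₃, b₂, b₁, b₀, 0, 0;
           0, b₃, b₂, b₁, b₀, 0;
           0, 0, b₃, b₂, b₁, b₀] ≠ 0 := right_ne_zero_of_mul hμres
    have hμ : (a₂ * b₃ - a₃ * b₂) ≠ 0 := left_ne_zero_of_mul hμres
    have hc5K : a₃ * b₂ - a₂ * b₃ ≠ 0 := by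
      intro h
      exact hμ (by rw [show a₂*b₃ - a₃*b₂ = -(a₃*b₂ - a₂*b₃) from by ring, h, neg_zero])
    have hinj : Function.Injective (algebraMap K (AlgebraicClosure K)) :=
      (algebraMap K (AlgebraicClosure K)).injective
    constructor
    · have key : Matrix.det
          !![2 * (a₃ * b₀ - a₀ * b₃), a₃ * b₁ - a₁ * b₃, a₂ * b₀ - a₀ * b₂;
             a₃ * b₁ - a₁ * b₃, 2 * (a₃ * b₂ - a₂ * b₃),
               2 * (a₀ * b₃ - a₃ * b₀) + (a₂ * b₁ - a₁ * b₂) + (a₃ * b₀ - a₀ * b₃);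
             a₂ * b₀ - a₀ * b₂,
               2 * (a₀ * b₃ - a₃ * b₀) + (a₂ * b₁ - a₁ * b₂) + (a₃ * b₀ - a₀ * b₃),
               2 * (a₁ * b₀ - a₀ * b₁)]
          = -2 * Matrix.det
          !![a₃, a₂, a₁, a₀, 0, 0;
             0, a₃, a₂, a₁, a₀, 0;
             0, 0, a₃, a₂, a₁, a₀;
             b₃, b₂, b₁, b₀, 0, 0;
             0, b₃, b₂, b₁, b₀, 0;
             0, 0, b₃, b₂, b₁, b₀] := by
        rw [det_six_sylvester]
        simp [Matrix.det_fin_three]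
        ring
      rw [key]
      exact mul_ne_zero (neg_ne_zero.mpr h2) hres
    · apply conic_irred
      · intro h
        exact hc5K (hinj (by rw [h, map_zero]))
      · have hδK : (2*(a₃*b₁ - a₁*b₃)*(2 * (a₀ * b₃ - a₃ * b₀) + (a₂ * b₁ - a₁ * b₂) + (a₃ * b₀ - a₀ * b₃))
              - 4*(a₃*b₂ - a₂*b₃)*(a₂*b₀ - a₀*b₂))^2
            - 4*((a₃*b₁ - a₁*b₃)^2 - 4*(a₃*b₂ - a₂*b₃)*(a₃*b₀ - a₀*b₃))
              * ((2 * (a₀ * b₃ - a₃ * b₀) + (a₂ * b₁ - a₁ * b₂) + (a₃ * b₀ - a₀ * b₃))^2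
                - 4*(a₃*b₂ - a₂*b₃)*(a₁*b₀ - a₀*b₁)) ≠ 0 := by
          have key2 : (2*(a₃*b₁ - a₁*b₃)*(2 * (a₀ * b₃ - a₃ * b₀) + (a₂ * b₁ - a₁ * b₂) + (a₃ * b₀ - a₀ * b₃))
                - 4*(a₃*b₂ - a₂*b₃)*(a₂*b₀ - a₀*b₂))^2
              - 4*((a₃*b₁ - a₁*b₃)^2 - 4*(a₃*b₂ - a₂*b₃)*(a₃*b₀ - a₀*b₃))
                * ((2 * (a₀ * b₃ - a₃ * b₀) + (a₂ * b₁ - a₁ * b₂) + (a₃ * b₀ - a₀ * b₃))^2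
                  - 4*(a₃*b₂ - a₂*b₃)*(a₁*b₀ - a₀*b₁))
              = 16 * (a₃*b₂ - a₂*b₃) * Matrix.det
              !![a₃, a₂, a₁, a₀, 0, 0;
                 0, a₃, a₂, a₁, a₀, 0;
                 0, 0, a₃, a₂, a₁, a₀;
                 b₃, b₂, b₁, b₀, 0, 0;
                 0, b₃, b₂, b₁, b₀, 0;
                 0, 0, b₃, b₂, b₁, b₀] := by
            rw [det_six_sylvester]
            ring
          rw [key2]
          refine mul_ne_zero (mul_ne_zero ?_ hc5K) hres
          rw [show (16:K) = 2^4 from by norm_num]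
          exact pow_ne_zero _ h2
        have hcast : (2 * algebraMap K (AlgebraicClosure K) (a₃*b₁ - a₁*b₃)
              * algebraMap K (AlgebraicClosure K)
                (2 * (a₀ * b₃ - a₃ * b₀) + (a₂ * b₁ - a₁ * b₂) + (a₃ * b₀ - a₀ * b₃))
              - 4 * algebraMap K (AlgebraicClosure K) (a₃*b₂ - a₂*b₃)
              * algebraMap K (AlgebraicClosure K) (a₂*b₀ - a₀*b₂))^2
            - 4 * ((algebraMap K (AlgebraicClosure K) (a₃*b₁ - a₁*b₃))^2
              - 4 * algebraMap K (AlgebraicClosure K) (a₃*b₂ - a₂*b₃)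
              * algebraMap K (AlgebraicClosure K) (a₃*b₀ - a₀*b₃))
              * ((algebraMap K (AlgebraicClosure K)
                  (2 * (a₀ * b₃ - a₃ * b₀) + (a₂ * b₁ - a₁ * b₂) + (a₃ * b₀ - a₀ * b₃)))^2
                - 4 * algebraMap K (AlgebraicClosure K) (a₃*b₂ - a₂*b₃)
                * algebraMap K (AlgebraicClosure K) (a₁*b₀ - a₀*b₁))
            = algebraMap K (AlgebraicClosure K)
              ((2*(a₃*b₁ - a₁*b₃)*(2 * (a₀ * b₃ - a₃ * b₀) + (a₂ * b₁ - a₁ * b₂) + (a₃ * b₀ - a₀ * b₃))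
                - 4*(a₃*b₂ - a₂*b₃)*(a₂*b₀ - a₀*b₂))^2
              - 4*((a₃*b₁ - a₁*b₃)^2 - 4*(a₃*b₂ - a₂*b₃)*(a₃*b₀ - a₀*b₃))
                * ((2 * (a₀ * b₃ - a₃ * b₀) + (a₂ * b₁ - a₁ * b₂) + (a₃ * b₀ - a₀ * b₃))^2
                  - 4*(a₃*b₂ - a₂*b₃)*(a₁*b₀ - a₀*b₁))) := by
          simp only [map_mul, map_sub, map_add, map_pow, map_ofNat]
        rw [hcast]
        intro h
        exact hδK (hinj (by rw [h, map_zero]))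
end

section
/- Let K be a field of characteristic ≠ 2 with algebraic closure K̄, and let P, Q ∈ K[x] be generic, i.e. μ_{2,3} ≠ 0, μ_{1,3}² − 4μ_{0,3}μ_{2,3} ≠ 0, and Δ̃, ∂Δ̃/∂x₁, ∂Δ̃/∂x₂ have no common zero in K̄². Then the univariate polynomial S(x) = Δ̃(x,x) ∈ K[x] has degree 4 and is separable, i.e. it has no repeated roots in K̄. (The Remark following Proposition 3.11 of the paper.) -/
open MvPolynomial

lemma aux_coprime {L : Type*} [Field L] [IsAlgClosed L] (p q : Polynomial L)
    (h : ∀ x : L, ¬(p.eval x = 0 ∧ q.eval x = 0)) : IsCoprime p q := by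
  classical
  rw [← EuclideanDomain.gcd_isUnit_iff]
  by_contra hu
  obtain ⟨x, hx⟩ := IsAlgClosed.exists_root (EuclideanDomain.gcd p q)
    (fun hdeg => hu (Polynomial.isUnit_iff_degree_eq_zero.2 hdeg))
  exact h x ⟨Polynomial.eval_eq_zero_of_dvd_of_eval_eq_zero
      (EuclideanDomain.gcd_dvd_left p q) hx,
    Polynomial.eval_eq_zero_of_dvd_of_eval_eq_zero
      (EuclideanDomain.gcd_dvd_right p q) hx⟩


/-- **Remark after Proposition 3.11.** Under the genericity assumptions, the
univariate polynomial `S(x) = Δ̃(x,x) ∈ K[x]` has degree `4` and is separable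
(no repeated roots in `K̄`). -/
theorem S_polynomial_degree_four_separable
    (K : Type*) [Field K] (hchar : (2 : K) ≠ 0)
    (a₀ a₁ a₂ a₃ b₀ b₁ b₂ b₃ : K)
    (μ : Fin 4 → Fin 4 → K)
    (hμ : ∀ i j, μ i j = ![a₀, a₁, a₂, a₃] i * ![b₀, b₁, b₂, b₃] j
      - ![a₀, a₁, a₂, a₃] j * ![b₀, b₁, b₂, b₃] i)
    (hμ23 : μ 2 3 ≠ 0)
    (hdisc : μ 1 3 ^ 2 - 4 * μ 0 3 * μ 2 3 ≠ 0)
    (φ : K → MvPolynomial (Fin 2) (AlgebraicClosure K))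
    (hφ : ∀ c, φ c = C (algebraMap K (AlgebraicClosure K) c))
    (D : MvPolynomial (Fin 2) (AlgebraicClosure K))
    (hD : D = φ (μ 1 0) + φ (μ 2 0) * X 1 + φ (μ 3 0) * X 1 ^ 2
      + (φ (μ 2 0) + φ (μ 3 0 + μ 2 1) * X 1 + φ (μ 3 1) * X 1 ^ 2) * X 0
      + (φ (μ 3 0) + φ (μ 3 1) * X 1 + φ (μ 3 2) * X 1 ^ 2) * X 0 ^ 2)
    (hgen : ∀ p : Fin 2 → AlgebraicClosure K,
      ¬(eval p D = 0 ∧ eval p (pderiv 0 D) = 0 ∧ eval p (pderiv 1 D) = 0))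
    (S : Polynomial K)
    -- `S(x) = Δ̃(x,x)`:
    (hS : S = (Polynomial.C (μ 1 0) + Polynomial.C (μ 2 0) * Polynomial.X
        + Polynomial.C (μ 3 0) * Polynomial.X ^ 2)
      + (Polynomial.C (μ 2 0) + Polynomial.C (μ 3 0 + μ 2 1) * Polynomial.X
        + Polynomial.C (μ 3 1) * Polynomial.X ^ 2) * Polynomial.X
      + (Polynomial.C (μ 3 0) + Polynomial.C (μ 3 1) * Polynomial.X
        + Polynomial.C (μ 3 2) * Polynomial.X ^ 2) * Polynomial.X ^ 2) :
    S.degree = 4 ∧ S.Separable := by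
  set f := algebraMap K (AlgebraicClosure K) with hf
  have hμ32 : μ 3 2 = - μ 2 3 := by rw [hμ, hμ]; simp
  have hμ32' : μ 3 2 ≠ 0 := by rw [hμ32]; simpa using hμ23
  have hdeg : S.degree = 4 := by
    rw [hS]
    compute_degree!
    all_goals simpa using hμ32'
  refine ⟨hdeg, ?_⟩
  rw [← Polynomial.separable_map f]
  apply aux_coprime
  intro x hx
  obtain ⟨h1, h2⟩ := hx
  rw [Polynomial.derivative_map] at h2
  apply hgen ![x, x]
  have e1 : eval ![x, x] D = (S.map f).eval x := by
    simp only [hD, hφ, hS, Polynomial.eval_map, Polynomial.eval₂_add,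
      Polynomial.eval₂_mul, Polynomial.eval₂_pow, Polynomial.eval₂_C,
      Polynomial.eval₂_X, map_add, map_mul, map_pow, eval_C, eval_X,
      eval_add, eval_mul, eval_pow]
    simp [Matrix.cons_val_zero, Matrix.cons_val_one]
  have e2 : eval ![x, x] (pderiv 0 D) = eval ![x, x] (pderiv 1 D) := by
    simp only [hD, hφ, map_add, map_mul, map_pow, pderiv_C, pderiv_X,
      Derivation.leibniz, Derivation.leibniz_pow, smul_eq_mul,
      eval_add, eval_mul, eval_pow, eval_C, eval_X]
    simp [Pi.single_apply]
    ring
  have e3 : ((S.map f).derivative).eval x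
      = eval ![x, x] (pderiv 0 D) + eval ![x, x] (pderiv 1 D) := by
    rw [Polynomial.derivative_map]
    simp only [hD, hφ, hS, map_add, map_mul, map_pow, pderiv_C, pderiv_X,
      Derivation.leibniz, Derivation.leibniz_pow, smul_eq_mul,
      eval_add, eval_mul, eval_pow, eval_C, eval_X,
      Polynomial.derivative_add, Polynomial.derivative_mul, Polynomial.derivative_C,
      Polynomial.derivative_X, Polynomial.derivative_pow,
      Polynomial.eval_map, Polynomial.eval₂_add, Polynomial.eval₂_mul,
      Polynomial.eval₂_pow, Polynomial.eval₂_C, Polynomial.eval₂_X]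
    simp [Pi.single_apply, map_ofNat]
    ring
  have hchar' : (2 : AlgebraicClosure K) ≠ 0 := by
    intro h
    have h2' : f 2 = f 0 := by rw [map_ofNat, map_zero, h]
    exact hchar ((algebraMap K (AlgebraicClosure K)).injective h2')
  have h02 : eval ![x, x] (pderiv 0 D) = 0 := by
    rw [Polynomial.derivative_map] at e3
    have : 2 * eval ![x, x] (pderiv 0 D) = 0 := by
      rw [two_mul]
      nth_rewrite 2 [e2]
      rw [← e3]
      exact h2
    exact (mul_eq_zero.1 this).resolve_left hchar'
  exact ⟨by rw [e1]; exact h1, h02, by rw [← e2]; exact h02⟩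
end
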